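/- Suppose c'(0) > 0 and g(k) → ∞ as k → ∞. Then the Bellman equation p(s) = min_{0 ≤ t ≤ s, k ∈ ℕ, k ≥ 1} { c(s − t) + g(k) + (1+τ)·k·p(t/k) } has a unique solution p* in 𝓘, and with t*(s), k*(s) the minimizers under p* and the sequences defined by b_0 = 1, v_i = b_i − t*(b_i), k_i = k*(b_i), b_{i+1} = (b_i − v_i)/k_i, the triple (p*, {v_i}, {k_i}) is an equilibrium for the production network: (i) p*(0) = 0; (ii) p*(s) − c(s − t) − g(k) − (1+τ)·k·p*(t/k) ≤ 0 for all 0 ≤ t ≤ s ≤ 1 and all integers k ≥ 1; and (iii) π_i := p*(b_i) − c(v_i) − g(k_i) − (1+τ)·k_i·p*((b_i − v_i)/k_i) = 0 for all i ≥ 0. -/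

import Mathlib

open Set Filter

/-- The set of attainable values at stage `s` for a firm facing price function `p`,
choosing an upstream boundary `t ∈ [0, s]` and a number `k ≥ 1` of suppliers:
`c(s − t) + g(k) + (1+τ)·k·p(t/k)`. -/
def networkChoices (τ : ℝ) (c : ℝ → ℝ) (g : ℕ → ℝ) (p : ℝ → ℝ) (s : ℝ) : Set ℝ :=
  {v | ∃ t ∈ Set.Icc 0 s, ∃ k : ℕ, 1 ≤ k ∧
    v = c (s - t) + g k + (1 + τ) * (k : ℝ) * p (t / (k : ℝ))}

/-- The candidate class 𝓘 for the production network: continuous `p` on `[0,1]` with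
`c'(0)·s ≤ p(s) ≤ c(s)`. -/
def networkClass (c cd : ℝ → ℝ) : Set (ℝ → ℝ) :=
  {p | ContinuousOn p (Set.Icc 0 1) ∧
    ∀ s ∈ Set.Icc (0 : ℝ) 1, cd 0 * s ≤ p s ∧ p s ≤ c s}

open Topology

/-! The Bellman operator `T` maps 𝓘 into itself: beyond finitely many suppliers the assembly cost
exceeds the cost `c s` of producing in house, so `T p s` is a minimum over a compact set of choices,
attained and continuous in `s`. Since `T` is monotone and `T c ≤ c`, the iterates `Tⁿ c` decrease
to a limit `p*`, which is a fixed point.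

For two orbits of `T`, follow the optimal choices of one of them back `n` stages, to a stage `x`:
the gap between the orbits at `s` is at most `P (c x - c'(0) x)`, where the accumulated factor
`P ≥ (1+τ)ⁿ` of transaction costs also satisfies `P c'(0) x ≤ c 1`. Hence
`x ≤ u := c 1 / c'(0) / (1+τ)ⁿ`, and since `c x / x` is nondecreasing the gap is at most
`c 1 / c'(0) · (c u / u - c'(0))`, which tends to `0`. So the iterates converge uniformly, which
makes `p*` continuous, and every fixed point in 𝓘 coincides with `p*`. -/

theorem ConvexOn.mul_le_of_hasDerivWithinAt {c : ℝ → ℝ} {a x : ℝ}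
    (hc : ConvexOn ℝ (Icc 0 1) c) (hc0 : c 0 = 0) (ha : HasDerivWithinAt c a (Ioi 0) 0)
    (hx : x ∈ Icc (0 : ℝ) 1) : a * x ≤ c x := by
  rcases hx.1.eq_or_lt with rfl | hx0
  · simp [hc0]
  have h := hc.le_slope_of_hasDerivWithinAt_Ioi (by simp) hx hx0 ha
  rw [slope_def_field, hc0, sub_zero, sub_zero, le_div_iff₀ hx0] at h
  linarith

theorem ConvexOn.mul_sub_le_mul_slope_sub {c : ℝ → ℝ} {a P x u B : ℝ}
    (hc : ConvexOn ℝ (Icc 0 1) c) (hc0 : c 0 = 0) (ha : HasDerivWithinAt c a (Ioi 0) 0)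
    (hx : x ∈ Icc 0 u) (hu : u ∈ Ioc (0 : ℝ) 1) (hP : 0 ≤ P) (hPx : P * x ≤ B) :
    P * (c x - a * x) ≤ B * (slope c 0 u - a) := by
  have h0 : (0 : ℝ) ∈ Icc 0 1 := by simp
  have hu' : u ∈ Icc (0 : ℝ) 1 := Ioc_subset_Icc_self hu
  have hau : 0 ≤ slope c 0 u - a :=
    sub_nonneg.2 (hc.le_slope_of_hasDerivWithinAt_Ioi h0 hu' hu.1 ha)
  rcases hx.1.eq_or_lt with rfl | hx0
  · simpa [hc0] using mul_nonneg (by simpa using hPx) hau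
  have hx' : x ∈ Icc (0 : ℝ) 1 := ⟨hx0.le, hx.2.trans hu.2⟩
  have hslope : slope c 0 x ≤ slope c 0 u :=
    hc.slope_mono h0 ⟨hx', hx0.ne'⟩ ⟨hu', hu.1.ne'⟩ hx.2
  have hcx : c x - a * x = x * (slope c 0 x - a) := by
    rw [slope_def_field, hc0]; field_simp; ring
  calc P * (c x - a * x) = P * x * (slope c 0 x - a) := by rw [hcx]; ring
    _ ≤ B * (slope c 0 u - a) :=
      mul_le_mul hPx (by linarith)
        (sub_nonneg.2 (hc.le_slope_of_hasDerivWithinAt_Ioi h0 hx' hx0 ha))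
        ((mul_nonneg hP hx.1).trans hPx)

noncomputable def gapRadius (τ : ℝ) (c : ℝ → ℝ) (a : ℝ) (n : ℕ) : ℝ :=
  min 1 (c 1 / a / (1 + τ) ^ n)

noncomputable def gapBound (τ : ℝ) (c : ℝ → ℝ) (a : ℝ) (n : ℕ) : ℝ :=
  c 1 / a * (slope c 0 (gapRadius τ c a n) - a)

theorem gapRadius_mem_Ioc {τ a : ℝ} {c : ℝ → ℝ} (hτ : 0 < τ) (hca : 0 < c 1 / a) (n : ℕ) :
    gapRadius τ c a n ∈ Ioc (0 : ℝ) 1 :=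
  ⟨lt_min one_pos (by positivity), min_le_left _ _⟩

theorem tendsto_gapBound {τ a : ℝ} {c : ℝ → ℝ} (hτ : 0 < τ) (hca : 0 < c 1 / a)
    (ha : HasDerivWithinAt c a (Ioi 0) 0) : Tendsto (gapBound τ c a) atTop (𝓝 0) := by
  have hu : Tendsto (gapRadius τ c a) atTop (𝓝[>] 0) := by
    refine tendsto_nhdsWithin_iff.2 ⟨squeeze_zero (fun n => (gapRadius_mem_Ioc hτ hca n).1.le)
      (fun n => min_le_right _ _) ?_, Eventually.of_forall fun n => (gapRadius_mem_Ioc hτ hca n).1⟩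
    exact tendsto_const_nhds.div_atTop (tendsto_pow_atTop_atTop_of_one_lt (by linarith))
  have hslope := ((hasDerivWithinAt_iff_tendsto_slope' (by simp)).1 ha).comp hu
  rw [show (0 : ℝ) = c 1 / a * (a - a) by ring]
  exact (hslope.sub_const a).const_mul _

theorem ContinuousOn.sInf_image_of_isCompact {X Y α : Type*} [TopologicalSpace X]
    [TopologicalSpace Y] [ConditionallyCompleteLinearOrder α] [TopologicalSpace α]
    [OrderTopology α] {F : X → Y → α} {S : Set X} {K : Set Y} (hK : IsCompact K)
    (hF : ContinuousOn (Function.uncurry F) (S ×ˢ K)) :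
    ContinuousOn (fun x => sInf (F x '' K)) S := by
  have : CompactSpace K := isCompact_iff_compactSpace.1 hK
  rw [continuousOn_iff_continuous_domRestrict]
  have hF' : Continuous fun xy : S × K => F xy.1 xy.2 :=
    hF.comp_continuous (f := fun xy : S × K => ((xy.1 : X), (xy.2 : Y))) (by fun_prop)
      fun xy => ⟨xy.1.2, xy.2.2⟩
  convert isCompact_univ.continuous_sInf (f := fun (x : S) (y : K) => F x y) hF' using 2 with x
  simp [image_univ, ← image_eq_range]

structure NetworkModel (τ : ℝ) (c cd : ℝ → ℝ) (g : ℕ → ℝ) : Prop where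
  tau_pos : 0 < τ
  cost_convexOn : ConvexOn ℝ (Icc 0 1) c
  cost_continuousOn : ContinuousOn c (Icc 0 1)
  cost_monotoneOn : MonotoneOn c (Icc 0 1)
  cost_zero : c 0 = 0
  cost_hasDerivWithinAt : HasDerivWithinAt c (cd 0) (Ioi 0) 0
  deriv_cost_zero_pos : 0 < cd 0
  assembly_nonneg : ∀ k, 1 ≤ k → 0 ≤ g k
  assembly_one : g 1 = 0
  tendsto_assembly : Tendsto g atTop atTop

noncomputable def bellman (τ : ℝ) (c : ℝ → ℝ) (g : ℕ → ℝ) (p : ℝ → ℝ) (s : ℝ) : ℝ :=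
  sInf (networkChoices τ c g p s)

/-- Subcontracting `t = s * θ` to `k` suppliers: unlike `t ∈ [0, s]`, the parameter `θ ∈ [0, 1]`
ranges over a set that does not depend on `s`. -/
noncomputable def networkValue (τ : ℝ) (c : ℝ → ℝ) (g : ℕ → ℝ) (p : ℝ → ℝ) (s : ℝ)
    (kθ : ℕ × ℝ) : ℝ :=
  c (s - s * kθ.2) + g kθ.1 + (1 + τ) * kθ.1 * p (s * kθ.2 / kθ.1)

theorem networkChoices_eq_image {τ s : ℝ} {c p : ℝ → ℝ} {g : ℕ → ℝ} (hs : 0 ≤ s) :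
    networkChoices τ c g p s = networkValue τ c g p s '' (Ici 1 ×ˢ Icc 0 1) := by
  ext v
  constructor
  · rintro ⟨t, ht, k, hk, rfl⟩
    have hst : s * (t / s) = t := by
      rcases hs.eq_or_lt with rfl | hs
      · simp [le_antisymm ht.2 ht.1]
      · field_simp
    refine ⟨(k, t / s), ⟨hk, div_nonneg ht.1 hs, div_le_one_of_le₀ ht.2 hs⟩, ?_⟩
    simp only [networkValue, hst]
  · rintro ⟨⟨k, θ⟩, ⟨hk, hθ⟩, rfl⟩
    exact ⟨s * θ, ⟨mul_nonneg hs hθ.1, mul_le_of_le_one_right hs hθ.2⟩, k, hk, rfl⟩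

theorem sub_mem_Icc_and_div_mem_Icc {s t : ℝ} {k : ℕ} (hs : s ∈ Icc (0 : ℝ) 1)
    (ht : t ∈ Icc 0 s) (hk : 1 ≤ k) : s - t ∈ Icc (0 : ℝ) 1 ∧ t / k ∈ Icc (0 : ℝ) 1 := by
  have hk' : (1 : ℝ) ≤ k := by exact_mod_cast hk
  refine ⟨⟨by linarith [ht.2], by linarith [ht.1, hs.2]⟩, div_nonneg ht.1 (by linarith), ?_⟩
  exact (div_le_self ht.1 hk').trans (ht.2.trans hs.2)

noncomputable def limitPrice (τ : ℝ) (c : ℝ → ℝ) (g : ℕ → ℝ) (s : ℝ) : ℝ :=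
  ⨅ n, (bellman τ c g)^[n] c s

namespace NetworkModel

variable {τ : ℝ} {c cd : ℝ → ℝ} {g : ℕ → ℝ} {p q : ℝ → ℝ} {s : ℝ}

theorem cost_mem_networkClass (hM : NetworkModel τ c cd g) : c ∈ networkClass c cd :=
  ⟨hM.cost_continuousOn, fun _ hs => ⟨hM.cost_convexOn.mul_le_of_hasDerivWithinAt hM.cost_zero
    hM.cost_hasDerivWithinAt hs, le_rfl⟩⟩

theorem cost_one_div_pos (hM : NetworkModel τ c cd g) : 0 < c 1 / cd 0 := by
  have := (hM.cost_mem_networkClass.2 1 (by simp)).1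
  have := hM.deriv_cost_zero_pos
  exact div_pos (by linarith) this

theorem tendsto_gapBound (hM : NetworkModel τ c cd g) :
    Tendsto (gapBound τ c (cd 0)) atTop (𝓝 0) :=
  _root_.tendsto_gapBound hM.tau_pos hM.cost_one_div_pos hM.cost_hasDerivWithinAt

theorem nonneg_of_mem_networkClass (hM : NetworkModel τ c cd g) (hp : p ∈ networkClass c cd)
    {x : ℝ} (hx : x ∈ Icc (0 : ℝ) 1) : 0 ≤ p x :=
  (mul_nonneg hM.deriv_cost_zero_pos.le hx.1).trans (hp.2 x hx).1

theorem apply_zero_of_mem_networkClass (hM : NetworkModel τ c cd g)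
    (hp : p ∈ networkClass c cd) : p 0 = 0 :=
  le_antisymm ((hp.2 0 (by simp)).2.trans_eq hM.cost_zero)
    (hM.nonneg_of_mem_networkClass hp (by simp))

theorem cost_mem_networkChoices (hM : NetworkModel τ c cd g) (hp : p ∈ networkClass c cd)
    (hs : 0 ≤ s) : c s ∈ networkChoices τ c g p s :=
  ⟨0, ⟨le_rfl, hs⟩, 1, le_rfl, by simp [hM.apply_zero_of_mem_networkClass hp, hM.assembly_one]⟩

theorem assembly_le_of_mem_networkChoices (hM : NetworkModel τ c cd g)
    (hp : p ∈ networkClass c cd) (hs : s ∈ Icc (0 : ℝ) 1) {t : ℝ} (ht : t ∈ Icc 0 s) {k : ℕ}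
    (hk : 1 ≤ k) : g k ≤ c (s - t) + g k + (1 + τ) * k * p (t / k) := by
  obtain ⟨hst, htk⟩ := sub_mem_Icc_and_div_mem_Icc hs ht hk
  have := hM.nonneg_of_mem_networkClass hM.cost_mem_networkClass hst
  have := hM.nonneg_of_mem_networkClass hp htk
  have : 0 ≤ (1 + τ) * k * p (t / k) := by have := hM.tau_pos; positivity
  linarith

theorem mul_le_of_mem_networkChoices (hM : NetworkModel τ c cd g) (hp : p ∈ networkClass c cd)
    (hs : s ∈ Icc (0 : ℝ) 1) {v : ℝ} (hv : v ∈ networkChoices τ c g p s) : cd 0 * s ≤ v := by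
  obtain ⟨t, ht, k, hk, rfl⟩ := hv
  obtain ⟨hst, htk⟩ := sub_mem_Icc_and_div_mem_Icc hs ht hk
  have hk0 : (0 : ℝ) < k := by exact_mod_cast hk
  have hc := (hM.cost_mem_networkClass.2 _ hst).1
  have hpk : cd 0 * t ≤ k * p (t / k) := by
    have := mul_le_mul_of_nonneg_left (hp.2 _ htk).1 hk0.le
    rwa [mul_left_comm, mul_div_cancel₀ _ hk0.ne'] at this
  have hτ : k * p (t / k) ≤ (1 + τ) * k * p (t / k) := by
    have := mul_nonneg hk0.le (hM.nonneg_of_mem_networkClass hp htk)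
    nlinarith [hM.tau_pos]
  linarith [hM.assembly_nonneg k hk]

theorem bddBelow_networkChoices (hM : NetworkModel τ c cd g) (hp : p ∈ networkClass c cd)
    (hs : s ∈ Icc (0 : ℝ) 1) : BddBelow (networkChoices τ c g p s) :=
  ⟨cd 0 * s, fun _ => hM.mul_le_of_mem_networkChoices hp hs⟩

theorem continuousOn_networkValue (hM : NetworkModel τ c cd g) (hp : p ∈ networkClass c cd) :
    ContinuousOn (Function.uncurry (networkValue τ c g p)) (Icc 0 1 ×ˢ (Ici 1 ×ˢ Icc 0 1)) := by
  have hmem : ∀ x : ℝ × ℕ × ℝ, x ∈ Icc (0 : ℝ) 1 ×ˢ (Ici 1 ×ˢ Icc 0 1) →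
      x.1 - x.1 * x.2.2 ∈ Icc (0 : ℝ) 1 ∧ x.1 * x.2.2 / (x.2.1 : ℝ) ∈ Icc (0 : ℝ) 1 :=
    fun x ⟨hs, hk, hθ⟩ => sub_mem_Icc_and_div_mem_Icc hs
      ⟨mul_nonneg hs.1 hθ.1, mul_le_of_le_one_right hs.1 hθ.2⟩ hk
  have hk : ContinuousOn (fun x : ℝ × ℕ × ℝ => (x.2.1 : ℝ)) (Icc 0 1 ×ˢ (Ici 1 ×ˢ Icc 0 1)) :=
    (by fun_prop : Continuous fun x : ℝ × ℕ × ℝ => (x.2.1 : ℝ)).continuousOn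
  have hcost := hM.cost_continuousOn.comp (by fun_prop) fun x hx => (hmem x hx).1
  have hprice := hp.1.comp ((by fun_prop : ContinuousOn (fun x : ℝ × ℕ × ℝ => x.1 * x.2.2) _).div
    hk fun x hx => Nat.cast_ne_zero.2 (Nat.one_le_iff_ne_zero.1 hx.2.1)) fun x hx => (hmem x hx).2
  exact (hcost.add (by fun_prop : Continuous fun x : ℝ × ℕ × ℝ => g x.2.1).continuousOn).add
    ((continuousOn_const.mul hk).mul hprice)

theorem isLeast_networkChoices_sInf_image (hM : NetworkModel τ c cd g)
    (hp : p ∈ networkClass c cd) {N : ℕ} (hN : ∀ k, N ≤ k → c 1 < g k) (hs : s ∈ Icc (0 : ℝ) 1) :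
    IsLeast (networkChoices τ c g p s)
      (sInf (networkValue τ c g p s '' (Icc 1 N ×ˢ Icc 0 1))) := by
  have hc1 := hM.nonneg_of_mem_networkClass hM.cost_mem_networkClass (x := 1) (by simp)
  have hN1 : 1 ≤ N := by
    by_contra h
    linarith [hN 1 (by omega), hM.assembly_one]
  have hK : IsCompact (Icc 1 N ×ˢ Icc (0 : ℝ) 1) := (finite_Icc 1 N).isCompact.prod isCompact_Icc
  have hKsub : Icc 1 N ×ˢ Icc (0 : ℝ) 1 ⊆ Ici 1 ×ˢ Icc 0 1 := prod_mono Icc_subset_Ici_self le_rfl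
  have hf : ContinuousOn (networkValue τ c g p s) (Icc 1 N ×ˢ Icc 0 1) :=
    (hM.continuousOn_networkValue hp).comp (f := fun kθ => (s, kθ)) (by fun_prop)
      fun kθ hkθ => ⟨hs, hKsub hkθ⟩
  have hhome : networkValue τ c g p s (1, 0) = c s := by
    simp [networkValue, hM.apply_zero_of_mem_networkClass hp, hM.assembly_one]
  have h10 : ((1 : ℕ), (0 : ℝ)) ∈ Icc 1 N ×ˢ Icc (0 : ℝ) 1 := ⟨⟨le_rfl, hN1⟩, by simp⟩
  obtain ⟨m, hm⟩ := (hK.image_of_continuousOn hf).exists_isLeast ⟨_, mem_image_of_mem _ h10⟩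
  rw [hm.csInf_eq, networkChoices_eq_image hs.1]
  refine ⟨image_mono hKsub hm.1, ?_⟩
  rintro _ ⟨⟨k, θ⟩, ⟨hk, hθ⟩, rfl⟩
  by_cases hkN : k ≤ N
  · exact hm.2 ⟨_, ⟨⟨hk, hkN⟩, hθ⟩, rfl⟩
  calc m ≤ c s := hhome ▸ hm.2 (mem_image_of_mem _ h10)
    _ ≤ c 1 := hM.cost_monotoneOn hs (by simp) hs.2
    _ ≤ g k := (hN k (by omega)).le
    _ ≤ networkValue τ c g p s (k, θ) := hM.assembly_le_of_mem_networkChoices hp hs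
      ⟨mul_nonneg hs.1 hθ.1, mul_le_of_le_one_right hs.1 hθ.2⟩ hk

theorem exists_assembly_gt (hM : NetworkModel τ c cd g) : ∃ N, ∀ k, N ≤ k → c 1 < g k :=
  eventually_atTop.1 (hM.tendsto_assembly.eventually_gt_atTop (c 1))

theorem isLeast_bellman (hM : NetworkModel τ c cd g) (hp : p ∈ networkClass c cd)
    (hs : s ∈ Icc (0 : ℝ) 1) : IsLeast (networkChoices τ c g p s) (bellman τ c g p s) := by
  obtain ⟨N, hN⟩ := hM.exists_assembly_gt
  have h := hM.isLeast_networkChoices_sInf_image hp hN hs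
  rwa [bellman, h.csInf_eq]

theorem continuousOn_bellman (hM : NetworkModel τ c cd g) (hp : p ∈ networkClass c cd) :
    ContinuousOn (bellman τ c g p) (Icc 0 1) := by
  obtain ⟨N, hN⟩ := hM.exists_assembly_gt
  refine ContinuousOn.congr (f := fun s => sInf (networkValue τ c g p s '' (Icc 1 N ×ˢ Icc 0 1)))
    (ContinuousOn.sInf_image_of_isCompact ((finite_Icc 1 N).isCompact.prod isCompact_Icc)
      ((hM.continuousOn_networkValue hp).mono (prod_mono le_rfl
        (prod_mono Icc_subset_Ici_self le_rfl)))) fun s hs => ?_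
  rw [bellman, (hM.isLeast_networkChoices_sInf_image hp hN hs).csInf_eq]

theorem bellman_mem_networkClass (hM : NetworkModel τ c cd g) (hp : p ∈ networkClass c cd) :
    bellman τ c g p ∈ networkClass c cd :=
  ⟨hM.continuousOn_bellman hp, fun _ hs =>
    ⟨le_csInf ⟨_, hM.cost_mem_networkChoices hp hs.1⟩ fun _ =>
        hM.mul_le_of_mem_networkChoices hp hs,
      (hM.isLeast_bellman hp hs).2 (hM.cost_mem_networkChoices hp hs.1)⟩⟩

theorem bellman_le_bellman (hM : NetworkModel τ c cd g) (hp : p ∈ networkClass c cd)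
    (hpq : ∀ x ∈ Icc (0 : ℝ) 1, p x ≤ q x) (hs : s ∈ Icc (0 : ℝ) 1) :
    bellman τ c g p s ≤ bellman τ c g q s := by
  refine le_csInf ⟨_, 0, ⟨le_rfl, hs.1⟩, 1, le_rfl, rfl⟩ ?_
  rintro _ ⟨t, ht, k, hk, rfl⟩
  have := hM.tau_pos
  refine (csInf_le (hM.bddBelow_networkChoices hp hs) ⟨t, ht, k, hk, rfl⟩).trans ?_
  gcongr
  exact hpq _ (sub_mem_Icc_and_div_mem_Icc hs ht hk).2

theorem exists_orbit_gap (hM : NetworkModel τ c cd g) {p q : ℕ → ℝ → ℝ}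
    (hp : ∀ n, p n ∈ networkClass c cd) (hq : ∀ n, q n ∈ networkClass c cd)
    (hpT : ∀ n, ∀ s ∈ Icc (0 : ℝ) 1, p (n + 1) s = bellman τ c g (p n) s)
    (hqT : ∀ n, ∀ s ∈ Icc (0 : ℝ) 1, q (n + 1) s = bellman τ c g (q n) s) (n : ℕ) :
    ∀ s ∈ Icc (0 : ℝ) 1, ∃ P x, (1 + τ) ^ n ≤ P ∧ x ∈ Icc (0 : ℝ) 1 ∧
      P * (cd 0 * x) ≤ q n s ∧ p n s - q n s ≤ P * (c x - cd 0 * x) := by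
  induction n with
  | zero =>
    intro s hs
    refine ⟨1, s, by simp, hs, by simpa using ((hq 0).2 s hs).1, ?_⟩
    linarith [((hp 0).2 s hs).2, ((hq 0).2 s hs).1]
  | succ n ih =>
    intro s hs
    obtain ⟨t, ht, k, hk, hqs⟩ := (hM.isLeast_bellman (hq n) hs).1
    obtain ⟨hst, htk⟩ := sub_mem_Icc_and_div_mem_Icc hs ht hk
    obtain ⟨P, x, hP, hx, hqx, hgap⟩ := ih (t / k) htk
    have hps : p (n + 1) s ≤ c (s - t) + g k + (1 + τ) * k * p n (t / k) :=
      (hpT n s hs).trans_le (csInf_le (hM.bddBelow_networkChoices (hp n) hs) ⟨t, ht, k, hk, rfl⟩)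
    have hk1 : (1 : ℝ) ≤ k := by exact_mod_cast hk
    have hτk : 0 ≤ (1 + τ) * k := by have := hM.tau_pos; positivity
    have hcst := hM.nonneg_of_mem_networkClass hM.cost_mem_networkClass hst
    have hgk := hM.assembly_nonneg k hk
    refine ⟨(1 + τ) * k * P, x, ?_, hx, ?_, ?_⟩
    · have hτ : 0 ≤ 1 + τ := by linarith [hM.tau_pos]
      rw [pow_succ']
      exact mul_le_mul (le_mul_of_one_le_right hτ hk1) hP (by positivity) hτk
    · rw [hqT n s hs, hqs, mul_assoc]
      nlinarith [mul_le_mul_of_nonneg_left hqx hτk]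
    · rw [hqT n s hs, hqs, mul_assoc]
      nlinarith [mul_le_mul_of_nonneg_left hgap hτk]

theorem orbit_sub_le_gapBound (hM : NetworkModel τ c cd g) {p q : ℕ → ℝ → ℝ}
    (hp : ∀ n, p n ∈ networkClass c cd) (hq : ∀ n, q n ∈ networkClass c cd)
    (hpT : ∀ n, ∀ s ∈ Icc (0 : ℝ) 1, p (n + 1) s = bellman τ c g (p n) s)
    (hqT : ∀ n, ∀ s ∈ Icc (0 : ℝ) 1, q (n + 1) s = bellman τ c g (q n) s)
    (n : ℕ) (hs : s ∈ Icc (0 : ℝ) 1) :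
    p n s - q n s ≤ gapBound τ c (cd 0) n := by
  obtain ⟨P, x, hP, hx, hqx, hgap⟩ := hM.exists_orbit_gap hp hq hpT hqT n s hs
  have hcd := hM.deriv_cost_zero_pos
  have hR : 0 < (1 + τ) ^ n := by have := hM.tau_pos; positivity
  have hPx : P * x ≤ c 1 / cd 0 := by
    rw [le_div_iff₀ hcd]
    calc P * x * cd 0 = P * (cd 0 * x) := by ring
      _ ≤ c s := hqx.trans ((hq n).2 s hs).2
      _ ≤ c 1 := hM.cost_monotoneOn hs (by simp) hs.2
  have hxu : x ∈ Icc 0 (gapRadius τ c (cd 0) n) := by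
    refine ⟨hx.1, le_min hx.2 ?_⟩
    rw [le_div_iff₀ hR]
    nlinarith [mul_le_mul_of_nonneg_left hP hx.1]
  exact hgap.trans (hM.cost_convexOn.mul_sub_le_mul_slope_sub hM.cost_zero
    hM.cost_hasDerivWithinAt hxu (gapRadius_mem_Ioc hM.tau_pos hM.cost_one_div_pos n)
    (hR.le.trans hP) hPx)

theorem iterate_bellman_mem_networkClass (hM : NetworkModel τ c cd g)
    (hp : p ∈ networkClass c cd) (n : ℕ) : (bellman τ c g)^[n] p ∈ networkClass c cd := by
  induction n with
  | zero => exact hp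
  | succ n ih => rw [Function.iterate_succ_apply']; exact hM.bellman_mem_networkClass ih

theorem iterate_bellman_sub_le (hM : NetworkModel τ c cd g) (hp : p ∈ networkClass c cd)
    (hq : q ∈ networkClass c cd) (n : ℕ) (hs : s ∈ Icc (0 : ℝ) 1) :
    (bellman τ c g)^[n] p s - (bellman τ c g)^[n] q s ≤ gapBound τ c (cd 0) n := by
  have hiter (r : ℝ → ℝ) (n : ℕ) (s : ℝ) (_ : s ∈ Icc (0 : ℝ) 1) :
      (bellman τ c g)^[n + 1] r s = bellman τ c g ((bellman τ c g)^[n] r) s :=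
    congrFun (Function.iterate_succ_apply' _ n r) s
  exact hM.orbit_sub_le_gapBound (p := fun n => (bellman τ c g)^[n] p)
    (q := fun n => (bellman τ c g)^[n] q) (hM.iterate_bellman_mem_networkClass hp)
    (hM.iterate_bellman_mem_networkClass hq) (hiter p) (hiter q) n hs

theorem iterate_bellman_le_iterate_bellman (hM : NetworkModel τ c cd g)
    (hp : p ∈ networkClass c cd) (hpq : ∀ x ∈ Icc (0 : ℝ) 1, p x ≤ q x) (n : ℕ) :
    ∀ s ∈ Icc (0 : ℝ) 1, (bellman τ c g)^[n] p s ≤ (bellman τ c g)^[n] q s := by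
  induction n with
  | zero => exact hpq
  | succ n ih =>
    intro s hs
    simp only [Function.iterate_succ_apply']
    exact hM.bellman_le_bellman (hM.iterate_bellman_mem_networkClass hp n) ih hs

theorem iterate_bellman_succ_le (hM : NetworkModel τ c cd g) (n : ℕ) (hs : s ∈ Icc (0 : ℝ) 1) :
    (bellman τ c g)^[n + 1] c s ≤ (bellman τ c g)^[n] c s :=
  have hc := hM.cost_mem_networkClass
  hM.iterate_bellman_le_iterate_bellman (hM.bellman_mem_networkClass hc)
    (fun _ hx => ((hM.bellman_mem_networkClass hc).2 _ hx).2) n s hs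

theorem limitPrice_le_iterate_bellman (hM : NetworkModel τ c cd g) (n : ℕ)
    (hs : s ∈ Icc (0 : ℝ) 1) : limitPrice τ c g s ≤ (bellman τ c g)^[n] c s :=
  ciInf_le ⟨0, by
    rintro _ ⟨m, rfl⟩
    exact hM.nonneg_of_mem_networkClass
      (hM.iterate_bellman_mem_networkClass hM.cost_mem_networkClass m) hs⟩ n

theorem tendsto_iterate_bellman (hM : NetworkModel τ c cd g) (hs : s ∈ Icc (0 : ℝ) 1) :
    Tendsto (fun n => (bellman τ c g)^[n] c s) atTop (𝓝 (limitPrice τ c g s)) :=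
  tendsto_atTop_ciInf (antitone_nat_of_succ_le fun n => hM.iterate_bellman_succ_le n hs)
    ⟨limitPrice τ c g s, by rintro _ ⟨n, rfl⟩; exact hM.limitPrice_le_iterate_bellman n hs⟩

theorem iterate_bellman_sub_limitPrice_le (hM : NetworkModel τ c cd g) (n : ℕ)
    (hs : s ∈ Icc (0 : ℝ) 1) :
    (bellman τ c g)^[n] c s - limitPrice τ c g s ≤ gapBound τ c (cd 0) n := by
  have hc := hM.cost_mem_networkClass
  refine le_of_tendsto'
    (((hM.tendsto_iterate_bellman hs).comp (tendsto_add_atTop_nat n)).const_sub _) fun m => ?_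
  rw [Function.comp_apply, add_comm, Function.iterate_add_apply]
  exact hM.iterate_bellman_sub_le hc (hM.iterate_bellman_mem_networkClass hc m) n hs

theorem limitPrice_mem_networkClass (hM : NetworkModel τ c cd g) :
    limitPrice τ c g ∈ networkClass c cd := by
  have hc := hM.cost_mem_networkClass
  have hunif : TendstoUniformlyOn (fun n => (bellman τ c g)^[n] c) (limitPrice τ c g) atTop
      (Icc 0 1) := by
    rw [Metric.tendstoUniformlyOn_iff]
    intro ε hε
    filter_upwards [hM.tendsto_gapBound.eventually
      (gt_mem_nhds hε)] with n hn s hs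
    rw [Real.dist_eq, abs_sub_comm, abs_of_nonneg (sub_nonneg.2
      (hM.limitPrice_le_iterate_bellman n hs))]
    exact (hM.iterate_bellman_sub_limitPrice_le n hs).trans_lt hn
  refine ⟨hunif.continuousOn (Frequently.of_forall fun n =>
    (hM.iterate_bellman_mem_networkClass hc n).1), fun s hs => ⟨?_, ?_⟩⟩
  · exact ge_of_tendsto' (hM.tendsto_iterate_bellman hs) fun n =>
      ((hM.iterate_bellman_mem_networkClass hc n).2 s hs).1
  · exact hM.limitPrice_le_iterate_bellman 0 hs

theorem bellman_limitPrice (hM : NetworkModel τ c cd g) (hs : s ∈ Icc (0 : ℝ) 1) :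
    bellman τ c g (limitPrice τ c g) s = limitPrice τ c g s := by
  have hc := hM.cost_mem_networkClass
  have hlim := hM.limitPrice_mem_networkClass
  refine le_antisymm ?_ (le_csInf ⟨_, hM.cost_mem_networkChoices hlim hs.1⟩ ?_)
  · refine ge_of_tendsto' ((hM.tendsto_iterate_bellman hs).comp (tendsto_add_atTop_nat 1))
      fun n => ?_
    rw [Function.comp_apply, Function.iterate_succ_apply']
    exact hM.bellman_le_bellman hlim (fun x hx => hM.limitPrice_le_iterate_bellman n hx) hs
  · rintro _ ⟨t, ht, k, hk, rfl⟩
    have htk := (sub_mem_Icc_and_div_mem_Icc hs ht hk).2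
    refine ge_of_tendsto' (((hM.tendsto_iterate_bellman htk).const_mul _).const_add _) fun n => ?_
    refine (hM.limitPrice_le_iterate_bellman (n + 1) hs).trans ?_
    rw [Function.iterate_succ_apply']
    exact csInf_le (hM.bddBelow_networkChoices (hM.iterate_bellman_mem_networkClass hc n) hs)
      ⟨t, ht, k, hk, rfl⟩

theorem eq_limitPrice_of_bellman_eq (hM : NetworkModel τ c cd g) (hq : q ∈ networkClass c cd)
    (hqT : ∀ s ∈ Icc (0 : ℝ) 1, q s = bellman τ c g q s) (hs : s ∈ Icc (0 : ℝ) 1) :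
    q s = limitPrice τ c g s := by
  have hc := hM.iterate_bellman_mem_networkClass hM.cost_mem_networkClass
  have hiter : ∀ n, ∀ s ∈ Icc (0 : ℝ) 1,
      (bellman τ c g)^[n + 1] c s = bellman τ c g ((bellman τ c g)^[n] c) s :=
    fun n s _ => congrFun (Function.iterate_succ_apply' _ n _) s
  have hlim := hM.tendsto_iterate_bellman hs
  have hqc : q s - limitPrice τ c g s ≤ 0 :=
    le_of_tendsto_of_tendsto' (hlim.const_sub _) hM.tendsto_gapBound fun n =>
      hM.orbit_sub_le_gapBound (p := fun _ => q) (fun _ => hq) hc (fun _ => hqT) hiter n hs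
  have hcq : limitPrice τ c g s - q s ≤ 0 :=
    le_of_tendsto_of_tendsto' (hlim.sub_const _) hM.tendsto_gapBound fun n =>
      hM.orbit_sub_le_gapBound (q := fun _ => q) hc (fun _ => hq) hiter (fun _ => hqT) n hs
  linarith

end NetworkModel

theorem production_network_equilibrium_general
    (c cd : ℝ → ℝ)
    (hderiv : ∀ x ∈ Set.Icc (0 : ℝ) 1, HasDerivAt c (cd x) x)
    (hmono : MonotoneOn c (Set.Icc (0 : ℝ) 1))
    (hconv : StrictConvexOn ℝ (Set.Icc (0 : ℝ) 1) c)
    (hczero : c 0 = 0)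
    (hcd0 : 0 < cd 0)
    (g : ℕ → ℝ)
    (hg_mono : ∀ k l : ℕ, 1 ≤ k → k < l → g k < g l)
    (hg1 : g 1 = 0)
    (hg_infty : Tendsto g atTop atTop)
    (τ : ℝ) (hτ : 0 < τ) :
    ∃ pstar ∈ networkClass c cd,
      -- p* solves the Bellman equation (the min being attained) ...
      (∀ s ∈ Set.Icc (0 : ℝ) 1, IsLeast (networkChoices τ c g pstar s) (pstar s)) ∧
      -- ... and is the unique solution in 𝓘
      (∀ q ∈ networkClass c cd,
        (∀ s ∈ Set.Icc (0 : ℝ) 1, q s = sInf (networkChoices τ c g q s)) →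
        ∀ s ∈ Set.Icc (0 : ℝ) 1, q s = pstar s) ∧
      -- minimizer functions t*, k* inducing an equilibrium
      ∃ tstar : ℝ → ℝ, ∃ kstar : ℝ → ℕ,
        (∀ s ∈ Set.Icc (0 : ℝ) 1,
          tstar s ∈ Set.Icc 0 s ∧ 1 ≤ kstar s ∧
          pstar s = c (s - tstar s) + g (kstar s) +
            (1 + τ) * (kstar s : ℝ) * pstar (tstar s / (kstar s : ℝ))) ∧
        ∀ b : ℕ → ℝ,
          b 0 = 1 →
          (∀ i, b (i + 1) = tstar (b i) / (kstar (b i) : ℝ)) →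
          -- (i) the upstream-most price is zero
          pstar 0 = 0 ∧
          -- (ii) no entrant can make positive profits
          (∀ t s : ℝ, 0 ≤ t → t ≤ s → s ≤ 1 → ∀ k : ℕ, 1 ≤ k →
            pstar s - c (s - t) - g k - (1 + τ) * (k : ℝ) * pstar (t / (k : ℝ)) ≤ 0) ∧
          -- (iii) every active firm makes zero profits
          (∀ i : ℕ,
            pstar (b i) - c (b i - tstar (b i)) - g (kstar (b i)) -
              (1 + τ) * ((kstar (b i) : ℝ)) *
                pstar ((b i - (b i - tstar (b i))) / (kstar (b i) : ℝ)) = 0) := by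
  have hM : NetworkModel τ c cd g :=
    { tau_pos := hτ
      cost_convexOn := hconv.convexOn
      cost_continuousOn := fun x hx => (hderiv x hx).continuousAt.continuousWithinAt
      cost_monotoneOn := hmono
      cost_zero := hczero
      cost_hasDerivWithinAt := (hderiv 0 (by simp)).hasDerivWithinAt
      deriv_cost_zero_pos := hcd0
      assembly_nonneg := fun k hk => hk.eq_or_lt.elim (fun h => h ▸ hg1.ge)
        fun h => hg1 ▸ (hg_mono 1 k le_rfl h).le
      assembly_one := hg1
      tendsto_assembly := hg_infty }
  have hmem := hM.limitPrice_mem_networkClass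
  have hleast : ∀ s ∈ Icc (0 : ℝ) 1,
      IsLeast (networkChoices τ c g (limitPrice τ c g) s) (limitPrice τ c g s) :=
    fun s hs => hM.bellman_limitPrice hs ▸ hM.isLeast_bellman hmem hs
  choose! tstar ht kstar hk hopt using fun s hs => (hleast s hs).1
  refine ⟨limitPrice τ c g, hmem, hleast,
    fun q hq hqT s hs => hM.eq_limitPrice_of_bellman_eq hq hqT hs, tstar, kstar,
    fun s hs => ⟨ht s hs, hk s hs, hopt s hs⟩, fun b hb0 hb => ?_⟩
  have hb_mem : ∀ i, b i ∈ Icc (0 : ℝ) 1 := by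
    intro i
    induction i with
    | zero => simp [hb0]
    | succ i ih => rw [hb i]; exact (sub_mem_Icc_and_div_mem_Icc ih (ht _ ih) (hk _ ih)).2
  refine ⟨hM.apply_zero_of_mem_networkClass hmem, fun t s ht0 hts hs1 k hk1 => ?_, fun i => ?_⟩
  · linarith [(hleast s ⟨ht0.trans hts, hs1⟩).2 ⟨t, ⟨ht0, hts⟩, k, hk1, rfl⟩]
  · rw [sub_sub_cancel, hopt _ (hb_mem i)]
    ring

/-- if `c'(0) > 0` and `g(k) → ∞`, the production-network Bellman equation
has a unique solution `p*` in 𝓘, and with the minimizers `t*, k*` and the induced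
boundaries `b_i`, allocations `v_i = b_i − t*(b_i)` and supplier numbers `k_i = k*(b_i)`,
the triple `(p*, {v_i}, {k_i})` is an equilibrium for the production network. -/
theorem production_network_equilibrium
    (c cd : ℝ → ℝ)
    (hderiv : ∀ x ∈ Set.Icc (0 : ℝ) 1, HasDerivAt c (cd x) x)
    (hcont_deriv : ContinuousOn cd (Set.Icc (0 : ℝ) 1))
    (hmono : MonotoneOn c (Set.Icc (0 : ℝ) 1))
    (hconv : StrictConvexOn ℝ (Set.Icc (0 : ℝ) 1) c)
    (hczero : c 0 = 0)
    (hcd0 : 0 < cd 0)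
    (g : ℕ → ℝ)
    (hg_mono : ∀ k l : ℕ, 1 ≤ k → k < l → g k < g l)
    (hg1 : g 1 = 0)
    (hg_infty : Tendsto g atTop atTop)
    (τ : ℝ) (hτ : 0 < τ) :
    ∃ pstar ∈ networkClass c cd,
      -- p* solves the Bellman equation (the min being attained) ...
      (∀ s ∈ Set.Icc (0 : ℝ) 1, IsLeast (networkChoices τ c g pstar s) (pstar s)) ∧
      -- ... and is the unique solution in 𝓘
      (∀ q ∈ networkClass c cd,
        (∀ s ∈ Set.Icc (0 : ℝ) 1, q s = sInf (networkChoices τ c g q s)) →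
        ∀ s ∈ Set.Icc (0 : ℝ) 1, q s = pstar s) ∧
      -- minimizer functions t*, k* inducing an equilibrium
      ∃ tstar : ℝ → ℝ, ∃ kstar : ℝ → ℕ,
        (∀ s ∈ Set.Icc (0 : ℝ) 1,
          tstar s ∈ Set.Icc 0 s ∧ 1 ≤ kstar s ∧
          pstar s = c (s - tstar s) + g (kstar s) +
            (1 + τ) * (kstar s : ℝ) * pstar (tstar s / (kstar s : ℝ))) ∧
        ∀ b : ℕ → ℝ,
          b 0 = 1 →
          (∀ i, b (i + 1) = tstar (b i) / (kstar (b i) : ℝ)) →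
          -- (i) the upstream-most price is zero
          pstar 0 = 0 ∧
          -- (ii) no entrant can make positive profits
          (∀ t s : ℝ, 0 ≤ t → t ≤ s → s ≤ 1 → ∀ k : ℕ, 1 ≤ k →
            pstar s - c (s - t) - g k - (1 + τ) * (k : ℝ) * pstar (t / (k : ℝ)) ≤ 0) ∧
          -- (iii) every active firm makes zero profits
          (∀ i : ℕ,
            pstar (b i) - c (b i - tstar (b i)) - g (kstar (b i)) -
              (1 + τ) * ((kstar (b i) : ℝ)) *
                pstar ((b i - (b i - tstar (b i))) / (kstar (b i) : ℝ)) = 0) :=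
  production_network_equilibrium_general c cd hderiv hmono hconv hczero hcd0 g hg_mono hg1 hg_infty
    τ hτ
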